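/- The updated matrix C' = C − q C x xᵀ C with q = (xᵀ1 + xᵀCx)⁻¹ is positive definite whenever C is positive definite and x ∈ {0,1}^u is nonzero. -/

import Mathlib

/-!
For `y ≠ 0`, Cauchy–Schwarz for the inner product `⟪v, w⟫ = vᵀCw` gives
`(xᵀCy)² ≤ (xᵀCx)(yᵀCy)`, hence
`yᵀC'y = yᵀCy - q (xᵀCy)² ≥ (1 - q xᵀCx) yᵀCy`.
Since `x` is a nonzero binary vector, `xᵀ1 > 0`, so `q xᵀCx = xᵀCx / (xᵀ1 + xᵀCx) < 1`.
-/

open Matrix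

theorem dotProduct_one_pos {n α : Type*} [Fintype n] [Semiring α] [PartialOrder α]
    [IsOrderedCancelAddMonoid α] {x : n → α} (hx : 0 ≤ x) (hx0 : x ≠ 0) : 0 < x ⬝ᵥ 1 := by
  rw [dotProduct_one]
  exact Finset.sum_pos' (fun i _ => hx i) (by simpa using (Pi.lt_def.mp (hx.lt_of_ne' hx0)).2)

namespace Matrix

variable {n : Type*} [Fintype n]

theorem IsHermitian.vecMul_eq_mulVec_of_real {A : Matrix n n ℝ} (hA : A.IsHermitian)
    (x : n → ℝ) : x ᵥ* A = A *ᵥ x := by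
  rw [← mulVec_transpose, ← conjTranspose_eq_transpose_of_trivial, hA.eq]

theorem PosSemidef.dotProduct_mulVec_sq_le {A : Matrix n n ℝ} (hA : A.PosSemidef) (x y : n → ℝ) :
    (x ⬝ᵥ A *ᵥ y) ^ 2 ≤ (x ⬝ᵥ A *ᵥ x) * (y ⬝ᵥ A *ᵥ y) := by
  let := A.toSeminormedAddCommGroup hA
  let := A.toInnerProductSpace hA
  have hinner (v w : n → ℝ) : inner ℝ v w = v ⬝ᵥ A *ᵥ w := dotProduct_comm _ _
  simpa only [sq, hinner] using real_inner_mul_inner_self_le x y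

theorem PosDef.sub_smul_vecMulVec_mulVec {A : Matrix n n ℝ} (hA : A.PosDef) {x : n → ℝ} {c : ℝ}
    (hc : c * (x ⬝ᵥ A *ᵥ x) < 1) :
    (A - c • vecMulVec (A *ᵥ x) (A *ᵥ x)).PosDef := by
  refine posDef_iff_dotProduct_mulVec.2 ⟨?_, fun y hy => ?_⟩
  · have hv : (vecMulVec (A *ᵥ x) (A *ᵥ x)).IsHermitian := by simp [IsHermitian]
    exact hA.isHermitian.sub (hv.smul (IsSelfAdjoint.all c))
  · have hquad : star y ⬝ᵥ (A - c • vecMulVec (A *ᵥ x) (A *ᵥ x)) *ᵥ y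
        = y ⬝ᵥ A *ᵥ y - c * (x ⬝ᵥ A *ᵥ y) ^ 2 := by
      have hAx : A *ᵥ x ⬝ᵥ y = x ⬝ᵥ A *ᵥ y := by
        rw [← hA.isHermitian.vecMul_eq_mulVec_of_real, dotProduct_mulVec]
      have hyAx : y ⬝ᵥ A *ᵥ x = x ⬝ᵥ A *ᵥ y := by rw [dotProduct_comm, hAx]
      simp only [star_trivial, sub_mulVec, smul_mulVec, vecMulVec_mulVec, op_smul_eq_smul,
        dotProduct_sub, dotProduct_smul, hAx, hyAx, smul_eq_mul]
      ring
    have hCS := hA.posSemidef.dotProduct_mulVec_sq_le x y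
    have hy' : 0 < y ⬝ᵥ A *ᵥ y := by simpa using hA.dotProduct_mulVec_pos hy
    rw [hquad]
    rcases le_or_gt 0 c with hc0 | hc0
    · nlinarith [mul_le_mul_of_nonneg_left hCS hc0]
    · nlinarith [sq_nonneg (x ⬝ᵥ A *ᵥ y)]

end Matrix

/-- The rank-one downdate C' = C − q C x xᵀ C with q = (xᵀ1 + xᵀCx)⁻¹ is
positive definite whenever C is positive definite and x is a nonzero binary
vector. -/
theorem downdate_posDef (u : ℕ) (C : Matrix (Fin u) (Fin u) ℝ) (x : Fin u → ℝ)
    (hC : C.PosDef) (hx01 : ∀ j, x j = 0 ∨ x j = 1) (hx : x ≠ 0) :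
    (C - (x ⬝ᵥ (1 : Fin u → ℝ) + x ⬝ᵥ C.mulVec x)⁻¹ •
        vecMulVec (C.mulVec x) (vecMul x C)).PosDef := by
  have hx_nonneg : 0 ≤ x := fun j => by rcases hx01 j with h | h <;> simp [h]
  have hs : 0 < x ⬝ᵥ 1 := dotProduct_one_pos hx_nonneg hx
  have ha : 0 < x ⬝ᵥ C *ᵥ x := by simpa using hC.dotProduct_mulVec_pos hx
  rw [hC.isHermitian.vecMul_eq_mulVec_of_real]
  refine hC.sub_smul_vecMulVec_mulVec ?_
  rw [inv_mul_lt_one₀ (by positivity)]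
  linarith
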